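/- arXiv:1806.05987 — 8 statements merged into one kernel-verified Lean document; each statement's English description precedes it below -/
import Mathlib

section
/- Let u ∈ V satisfy B(u,v) = F(v) for all v ∈ V, let u_X be the Galerkin solution in X, let u_W be the Galerkin solution in W := X + Y, and let e_Y ∈ Y satisfy B₀(e_Y, v) = F(v) − B(u_X, v) for all v ∈ Y. Assume the saturation property ‖u − u_W‖_B ≤ β·‖u − u_X‖_B holds for a constant β ∈ [0,1). Then the error estimate η := ‖e_Y‖_{B₀} satisfies √λ · η ≤ ‖u − u_X‖_B ≤ (√Λ / (√(1−γ²)·√(1−β²))) · η. -/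
set_option maxHeartbeats 1000000 in
/-- Theorem 4.1 (error estimation bound).
`V` is a real vector space, `B` and `B₀` are symmetric positive definite bilinear
forms with induced norms `‖v‖_B = √(B v v)` and `‖v‖_{B₀} = √(B₀ v v)`, `F` is a
linear functional, `X` and `Y` are subspaces with `X ∩ Y = {0}`, `uX` is the
Galerkin solution in `X`, `uW` is the Galerkin solution in `W = X + Y`, `eY ∈ Y`
solves `B₀(eY, v) = F(v) - B(uX, v)` for all `v ∈ Y`, norm equivalence constants
`λ, Λ > 0`, a strengthened Cauchy-Schwarz constant `γ ∈ [0,1)`, and the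
saturation assumption holds with `β ∈ [0,1)`.  Then
`√λ · η ≤ ‖u - uX‖_B ≤ (√Λ / (√(1-γ²)·√(1-β²))) · η` where `η = ‖eY‖_{B₀}`. -/
theorem stmt0
    {V : Type*} [AddCommGroup V] [Module ℝ V]
    (B B₀ : V →ₗ[ℝ] V →ₗ[ℝ] ℝ)
    (hBsymm : ∀ u v : V, B u v = B v u)
    (hBpos : ∀ v : V, v ≠ 0 → 0 < B v v)
    (hB₀symm : ∀ u v : V, B₀ u v = B₀ v u)
    (hB₀pos : ∀ v : V, v ≠ 0 → 0 < B₀ v v)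
    (F : V →ₗ[ℝ] ℝ)
    (X Y : Submodule ℝ V) (hXY : X ⊓ Y = ⊥)
    (lam Lam : ℝ) (hlam : 0 < lam) (hLam : 0 < Lam)
    (hequiv : ∀ v : V,
      lam * Real.sqrt (B v v) ^ 2 ≤ Real.sqrt (B₀ v v) ^ 2 ∧
      Real.sqrt (B₀ v v) ^ 2 ≤ Lam * Real.sqrt (B v v) ^ 2)
    (γ : ℝ) (hγ0 : 0 ≤ γ) (hγ1 : γ < 1)
    (hSCS : ∀ x ∈ X, ∀ y ∈ Y,
      |B₀ x y| ≤ γ * Real.sqrt (B₀ x x) * Real.sqrt (B₀ y y))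
    (u uX uW eY : V)
    (hu : ∀ v : V, B u v = F v)
    (huXmem : uX ∈ X) (huX : ∀ v ∈ X, B uX v = F v)
    (huWmem : uW ∈ X ⊔ Y) (huW : ∀ v ∈ X ⊔ Y, B uW v = F v)
    (heYmem : eY ∈ Y) (heY : ∀ v ∈ Y, B₀ eY v = F v - B uX v)
    (β : ℝ) (hβ0 : 0 ≤ β) (hβ1 : β < 1)
    (hsat : Real.sqrt (B (u - uW) (u - uW)) ≤ β * Real.sqrt (B (u - uX) (u - uX))) :
    Real.sqrt lam * Real.sqrt (B₀ eY eY) ≤ Real.sqrt (B (u - uX) (u - uX)) ∧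
    Real.sqrt (B (u - uX) (u - uX)) ≤
      (Real.sqrt Lam / (Real.sqrt (1 - γ ^ 2) * Real.sqrt (1 - β ^ 2))) *
        Real.sqrt (B₀ eY eY) := by
  have hBnn : ∀ v : V, 0 ≤ B v v := by
    intro v
    by_cases h : v = 0
    · simp [h]
    · exact (hBpos v h).le
  have hB₀nn : ∀ v : V, 0 ≤ B₀ v v := by
    intro v
    by_cases h : v = 0
    · simp [h]
    · exact (hB₀pos v h).le
  have cs : ∀ (C : V →ₗ[ℝ] V →ₗ[ℝ] ℝ), (∀ a b : V, C a b = C b a) →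
      (∀ v : V, v ≠ 0 → 0 < C v v) → ∀ p q : V, (C p q) ^ 2 ≤ C p p * C q q := by
    intro C hs hp p q
    by_cases hq : q = 0
    · simp [hq]
    · have hcpos : 0 < C q q := hp q hq
      have hnn : 0 ≤ C (C q q • p - C p q • q) (C q q • p - C p q • q) := by
        by_cases h : C q q • p - C p q • q = 0
        · rw [h]; simp
        · exact (hp _ h).le
      simp only [map_sub, map_smul, LinearMap.sub_apply, LinearMap.smul_apply,
        smul_eq_mul] at hnn
      rw [hs q p] at hnn
      nlinarith [hnn, hcpos]
  have hγ2 : 0 < 1 - γ ^ 2 := by nlinarith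
  have hβ2 : 0 < 1 - β ^ 2 := by nlinarith
  have hlo : ∀ v : V, lam * B v v ≤ B₀ v v := by
    intro v
    have h := (hequiv v).1
    rwa [Real.sq_sqrt (hBnn v), Real.sq_sqrt (hB₀nn v)] at h
  have hhi : ∀ v : V, B₀ v v ≤ Lam * B v v := by
    intro v
    have h := (hequiv v).2
    rwa [Real.sq_sqrt (hBnn v), Real.sq_sqrt (hB₀nn v)] at h
  have hGX : ∀ x ∈ X, B (u - uX) x = 0 := by
    intro x hx
    simp only [map_sub, LinearMap.sub_apply]
    rw [hu x, huX x hx, sub_self]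
  have hGW : ∀ w ∈ X ⊔ Y, B (u - uW) w = 0 := by
    intro w hw
    simp only [map_sub, LinearMap.sub_apply]
    rw [hu w, huW w hw, sub_self]
  have heY' : ∀ v ∈ Y, B₀ eY v = B (u - uX) v := by
    intro v hv
    rw [heY v hv]
    simp only [map_sub, LinearMap.sub_apply]
    rw [hu v]
  obtain ⟨x, hxX, y, hyY, hxy⟩ := Submodule.mem_sup.mp huWmem
  have hx'X : x - uX ∈ X := sub_mem hxX huXmem
  have hdmem : uW - uX ∈ X ⊔ Y := sub_mem huWmem (Submodule.mem_sup_left huXmem)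
  have hdeq : uW - uX = (x - uX) + y := by rw [← hxy]; abel
  have horth : B (u - uW) (uW - uX) = 0 := hGW _ hdmem
  have hsplit : u - uX = (u - uW) + (uW - uX) := by abel
  have hA := hBnn (u - uX)
  have hW := hBnn (u - uW)
  have hD := hBnn (uW - uX)
  have hE := hB₀nn eY
  have hpyth : B (u - uX) (u - uX)
      = B (u - uW) (u - uW) + B (uW - uX) (uW - uX) := by
    rw [hsplit]
    simp only [map_add, LinearMap.add_apply]
    rw [hBsymm (uW - uX) (u - uW), horth]
    ring
  have hsat2 : B (u - uW) (u - uW) ≤ β ^ 2 * B (u - uX) (u - uX) := by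
    have h2 := mul_self_le_mul_self (Real.sqrt_nonneg (B (u - uW) (u - uW))) hsat
    nlinarith [Real.sq_sqrt hW, Real.sq_sqrt hA]
  have hlow2 : (1 - β ^ 2) * B (u - uX) (u - uX) ≤ B (uW - uX) (uW - uX) := by
    nlinarith [hpyth, hsat2]
  have hDeq : B (uW - uX) (uW - uX) = B₀ eY y := by
    have h1 : B (u - uX) (uW - uX) = B (uW - uX) (uW - uX) := by
      conv_lhs => rw [hsplit]
      simp only [map_add, LinearMap.add_apply]
      rw [horth, zero_add]
    have h2 : B (u - uX) (uW - uX) = B (u - uX) (x - uX) + B (u - uX) y := by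
      rw [hdeq]
      simp only [map_add]
    rw [← h1, h2, hGX _ hx'X, zero_add]
    exact (heY' y hyY).symm
  have hB₀d : (1 - γ ^ 2) * B₀ y y ≤ B₀ (uW - uX) (uW - uX) := by
    rw [hdeq]
    have hscs := hSCS _ hx'X y hyY
    have h1 := (abs_le.mp hscs).1
    simp only [map_add, LinearMap.add_apply]
    nlinarith [sq_nonneg (Real.sqrt (B₀ (x - uX) (x - uX)) - γ * Real.sqrt (B₀ y y)),
      hB₀symm (x - uX) y, h1, Real.sq_sqrt (hB₀nn (x - uX)), Real.sq_sqrt (hB₀nn y),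
      Real.sqrt_nonneg (B₀ (x - uX) (x - uX)), Real.sqrt_nonneg (B₀ y y)]
  have hcsEy : (B₀ eY y) ^ 2 ≤ B₀ eY eY * B₀ y y := cs B₀ hB₀symm hB₀pos eY y
  have hDub : (1 - γ ^ 2) * B (uW - uX) (uW - uX) ≤ Lam * B₀ eY eY := by
    by_cases hD0 : B (uW - uX) (uW - uX) = 0
    · rw [hD0, mul_zero]
      exact mul_nonneg hLam.le hE
    · have hDpos : 0 < B (uW - uX) (uW - uX) := lt_of_le_of_ne hD (Ne.symm hD0)
      have h1 : B₀ (uW - uX) (uW - uX) ≤ Lam * B (uW - uX) (uW - uX) := hhi _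
      have p1 : (1 - γ ^ 2) * (B₀ eY y) ^ 2 ≤ (1 - γ ^ 2) * (B₀ eY eY * B₀ y y) :=
        mul_le_mul_of_nonneg_left hcsEy hγ2.le
      have p2 : B₀ eY eY * ((1 - γ ^ 2) * B₀ y y)
          ≤ B₀ eY eY * (Lam * B (uW - uX) (uW - uX)) :=
        mul_le_mul_of_nonneg_left (hB₀d.trans h1) hE
      have q1 : (1 - γ ^ 2) * B (uW - uX) (uW - uX) * B (uW - uX) (uW - uX)
          ≤ Lam * B₀ eY eY * B (uW - uX) (uW - uX) := by
        calc (1 - γ ^ 2) * B (uW - uX) (uW - uX) * B (uW - uX) (uW - uX)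
            = (1 - γ ^ 2) * (B₀ eY y) ^ 2 := by rw [hDeq]; ring
          _ ≤ (1 - γ ^ 2) * (B₀ eY eY * B₀ y y) := p1
          _ = B₀ eY eY * ((1 - γ ^ 2) * B₀ y y) := by ring
          _ ≤ B₀ eY eY * (Lam * B (uW - uX) (uW - uX)) := p2
          _ = Lam * B₀ eY eY * B (uW - uX) (uW - uX) := by ring
      exact le_of_mul_le_mul_right q1 hDpos
  have hfinal2 : (1 - γ ^ 2) * ((1 - β ^ 2) * B (u - uX) (u - uX)) ≤ Lam * B₀ eY eY :=
    le_trans (mul_le_mul_of_nonneg_left hlow2 hγ2.le) hDub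
  have hlower2 : lam * B₀ eY eY ≤ B (u - uX) (u - uX) := by
    by_cases hE0 : B₀ eY eY = 0
    · rw [hE0, mul_zero]; exact hA
    · have hEpos : 0 < B₀ eY eY := lt_of_le_of_ne hE (Ne.symm hE0)
      have h1 : B₀ eY eY = B (u - uX) eY := heY' eY heYmem
      have h2 : (B (u - uX) eY) ^ 2 ≤ B (u - uX) (u - uX) * B eY eY :=
        cs B hBsymm hBpos _ _
      have h3 : lam * B eY eY ≤ B₀ eY eY := hlo eY
      have q1 : lam * B₀ eY eY * B₀ eY eY ≤ B (u - uX) (u - uX) * B₀ eY eY := by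
        calc lam * B₀ eY eY * B₀ eY eY
            = lam * (B (u - uX) eY) ^ 2 := by rw [h1]; ring
          _ ≤ lam * (B (u - uX) (u - uX) * B eY eY) :=
              mul_le_mul_of_nonneg_left h2 hlam.le
          _ = B (u - uX) (u - uX) * (lam * B eY eY) := by ring
          _ ≤ B (u - uX) (u - uX) * B₀ eY eY :=
              mul_le_mul_of_nonneg_left h3 hA
      exact le_of_mul_le_mul_right q1 hEpos
  constructor
  · have h := Real.sqrt_le_sqrt hlower2
    rwa [Real.sqrt_mul hlam.le] at h
  · have h := Real.sqrt_le_sqrt hfinal2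
    rw [Real.sqrt_mul hγ2.le, Real.sqrt_mul hβ2.le, Real.sqrt_mul hLam.le] at h
    rw [div_mul_eq_mul_div, le_div_iff₀ (mul_pos (Real.sqrt_pos.mpr hγ2) (Real.sqrt_pos.mpr hβ2))]
    nlinarith [h]
end

section
/- Let u_X be the Galerkin solution in X and let u_{W₁} be the Galerkin solution in W₁ := X + Σ_{μ∈J̄} Y^μ. For each μ ∈ J̄ let e^μ ∈ Y^μ satisfy B₀(e^μ, v) = F(v) − B(u_X, v) for all v ∈ Y^μ, and set ζ := Σ_{μ∈J̄} ‖e^μ‖²_{B₀}. Then λ·ζ ≤ ‖u_{W₁} − u_X‖²_B ≤ (Λ/(1−γ²))·ζ. -/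
private lemma bilin_nonneg {V : Type*} [AddCommGroup V] [Module ℝ V]
    (C : V →ₗ[ℝ] V →ₗ[ℝ] ℝ) (hpos : ∀ v : V, v ≠ 0 → 0 < C v v) (v : V) :
    0 ≤ C v v := by
  rcases eq_or_ne v 0 with rfl | h
  · simp
  · exact (hpos v h).le

private lemma bilin_cs_sq {V : Type*} [AddCommGroup V] [Module ℝ V]
    (C : V →ₗ[ℝ] V →ₗ[ℝ] ℝ) (hs : ∀ u v : V, C u v = C v u)
    (hnn : ∀ v : V, 0 ≤ C v v) (u v : V) :
    (C u v) ^ 2 ≤ C u u * C v v := by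
  have hq : ∀ t : ℝ, 0 ≤ C v v * (t * t) + (2 * C u v) * t + C u u := by
    intro t
    have h := hnn (u + t • v)
    have hexp : C (u + t • v) (u + t • v)
        = C v v * (t * t) + (2 * C u v) * t + C u u := by
      simp only [map_add, map_smul, LinearMap.add_apply, LinearMap.smul_apply,
        smul_eq_mul, hs v u]
      ring
    rw [hexp] at h; linarith
  have hd := discrim_le_zero hq
  rw [discrim] at hd
  nlinarith

/-- Theorem 5.1, first estimate (spatial enrichment).
`uX` is the Galerkin solution in `X`, `uW₁` is the Galerkin solution in
`W₁ = X + Σ_{μ∈J̄} Y^μ` where the spaces `Y^μ`, `μ ∈ J̄`, are pairwise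
`B₀`-orthogonal.  For each `μ ∈ J̄`, `e^μ ∈ Y^μ` solves
`B₀(e^μ, v) = F(v) - B(uX, v)` for all `v ∈ Y^μ`, and
`ζ = Σ_{μ∈J̄} ‖e^μ‖²_{B₀}`.  With norm equivalence constants `λ, Λ > 0` and
strengthened Cauchy-Schwarz constant `γ ∈ [0,1)` between `X` and `Σ_{μ∈J̄} Y^μ`,
`λ·ζ ≤ ‖uW₁ - uX‖²_B ≤ (Λ/(1-γ²))·ζ`. -/
theorem stmt1
    {V : Type*} [AddCommGroup V] [Module ℝ V]
    (B B₀ : V →ₗ[ℝ] V →ₗ[ℝ] ℝ)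
    (hBsymm : ∀ u v : V, B u v = B v u)
    (hBpos : ∀ v : V, v ≠ 0 → 0 < B v v)
    (hB₀symm : ∀ u v : V, B₀ u v = B₀ v u)
    (hB₀pos : ∀ v : V, v ≠ 0 → 0 < B₀ v v)
    (F : V →ₗ[ℝ] ℝ)
    (X : Submodule ℝ V)
    {ι : Type*} (Jbar : Finset ι) (Y : ι → Submodule ℝ V)
    (hYorth : ∀ μ ∈ Jbar, ∀ ν ∈ Jbar, μ ≠ ν →
      ∀ y ∈ Y μ, ∀ y' ∈ Y ν, B₀ y y' = 0)
    (lam Lam : ℝ) (hlam : 0 < lam) (hLam : 0 < Lam)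
    (hequiv : ∀ v : V,
      lam * Real.sqrt (B v v) ^ 2 ≤ Real.sqrt (B₀ v v) ^ 2 ∧
      Real.sqrt (B₀ v v) ^ 2 ≤ Lam * Real.sqrt (B v v) ^ 2)
    (γ : ℝ) (hγ0 : 0 ≤ γ) (hγ1 : γ < 1)
    (hSCS : ∀ x ∈ X, ∀ y ∈ (⨆ μ ∈ Jbar, Y μ : Submodule ℝ V),
      |B₀ x y| ≤ γ * Real.sqrt (B₀ x x) * Real.sqrt (B₀ y y))
    (uX uW₁ : V)
    (huXmem : uX ∈ X) (huX : ∀ v ∈ X, B uX v = F v)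
    (huW₁mem : uW₁ ∈ X ⊔ ⨆ μ ∈ Jbar, Y μ)
    (huW₁ : ∀ v ∈ X ⊔ ⨆ μ ∈ Jbar, Y μ, B uW₁ v = F v)
    (e : ι → V)
    (hemem : ∀ μ ∈ Jbar, e μ ∈ Y μ)
    (he : ∀ μ ∈ Jbar, ∀ v ∈ Y μ, B₀ (e μ) v = F v - B uX v) :
    lam * (∑ μ ∈ Jbar, Real.sqrt (B₀ (e μ) (e μ)) ^ 2) ≤
        Real.sqrt (B (uW₁ - uX) (uW₁ - uX)) ^ 2 ∧
    Real.sqrt (B (uW₁ - uX) (uW₁ - uX)) ^ 2 ≤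
      (Lam / (1 - γ ^ 2)) * (∑ μ ∈ Jbar, Real.sqrt (B₀ (e μ) (e μ)) ^ 2) := by
  have hBnn : ∀ v : V, 0 ≤ B v v := bilin_nonneg B hBpos
  have hB₀nn : ∀ v : V, 0 ≤ B₀ v v := bilin_nonneg B₀ hB₀pos
  have hsq : ∀ x : ℝ, 0 ≤ x → Real.sqrt x ^ 2 = x := fun x hx => Real.sq_sqrt hx
  set S : Submodule ℝ V := ⨆ μ ∈ Jbar, Y μ with hS
  set d : V := uW₁ - uX with hd
  set E : V := ∑ μ ∈ Jbar, e μ with hE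
  set ζ : ℝ := ∑ μ ∈ Jbar, Real.sqrt (B₀ (e μ) (e μ)) ^ 2 with hζ
  have hζ' : ζ = ∑ μ ∈ Jbar, B₀ (e μ) (e μ) :=
    Finset.sum_congr rfl fun μ _ => hsq _ (hB₀nn _)
  have hζnn : 0 ≤ ζ := hζ ▸ Finset.sum_nonneg fun μ _ => sq_nonneg _
  rw [hsq _ (hBnn d)]
  -- basic memberships
  have hEmem : E ∈ S := Submodule.sum_mem _ fun μ hμ =>
    Submodule.mem_iSup_of_mem μ (Submodule.mem_iSup_of_mem hμ (hemem μ hμ))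
  have hYmemS : ∀ μ ∈ Jbar, ∀ v ∈ Y μ, v ∈ S := fun μ hμ v hv =>
    Submodule.mem_iSup_of_mem μ (Submodule.mem_iSup_of_mem hμ hv)
  have hXle : X ≤ X ⊔ S := le_sup_left
  have hSle : S ≤ X ⊔ S := le_sup_right
  -- residual identity for d
  have hBd : ∀ v, v ∈ X ⊔ S → B d v = F v - B uX v := by
    intro v hv
    rw [hd]
    simp only [map_sub, LinearMap.sub_apply]
    rw [huW₁ v hv]
  -- Galerkin orthogonality on X
  have hGal : ∀ v ∈ X, B d v = 0 := by
    intro v hv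
    rw [hBd v (hXle hv), huX v hv]; ring
  -- B₀ E agrees with the residual on S
  have hB₀E : ∀ v ∈ S, B₀ E v = F v - B uX v := by
    have hker : S ≤ LinearMap.ker (B₀ E + B uX - F) := by
      rw [hS]
      refine iSup₂_le fun ν hν => fun v hv => ?_
      rw [LinearMap.mem_ker]
      simp only [LinearMap.sub_apply, LinearMap.add_apply]
      have hsum : B₀ E v = B₀ (e ν) v := by
        rw [hE, map_sum, LinearMap.sum_apply]
        exact Finset.sum_eq_single_of_mem ν hν fun μ hμ hne =>
          hYorth μ hμ ν hν hne (e μ) (hemem μ hμ) v hv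
      rw [hsum, he ν hν v hv]; ring
    intro v hv
    have := hker hv
    rw [LinearMap.mem_ker] at this
    simp only [LinearMap.sub_apply, LinearMap.add_apply] at this
    linarith
  -- ζ = B₀ E E
  have hζE : B₀ E E = ζ := by
    rw [hζ']
    conv_lhs => rw [hE, map_sum]
    refine Finset.sum_congr rfl fun μ hμ => ?_
    rw [hB₀E (e μ) (hYmemS μ hμ (e μ) (hemem μ hμ)), he μ hμ (e μ) (hemem μ hμ)]
  -- B d E = ζ
  have hBdE : B d E = ζ := by
    rw [hBd E (hSle hEmem), ← hB₀E E hEmem, hζE]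
  -- norm equivalence without sqrt
  have hequiv' : ∀ v : V, lam * B v v ≤ B₀ v v ∧ B₀ v v ≤ Lam * B v v := by
    intro v
    have h := hequiv v
    rwa [hsq _ (hBnn v), hsq _ (hB₀nn v)] at h
  constructor
  · -- lower bound
    have hcs : (B d E) ^ 2 ≤ B d d * B E E := bilin_cs_sq B hBsymm hBnn d E
    have h1 : lam * B E E ≤ ζ := hζE ▸ (hequiv' E).1
    rcases eq_or_lt_of_le hζnn with h0 | h0
    · rw [← h0]; simpa using hBnn d
    · rw [hBdE] at hcs
      have hBEE := hBnn E
      have hBdd := hBnn d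
      nlinarith
  · -- upper bound
    have hγ2 : 0 < 1 - γ ^ 2 := by nlinarith
    obtain ⟨x, hx, y, hy, hxy⟩ := Submodule.mem_sup.mp
      (Submodule.sub_mem _ huW₁mem (hXle huXmem) : d ∈ X ⊔ S)
    have hxy' : x + y = d := by rw [hd]; exact hxy
    have hBdy : B d d = B₀ E y := by
      have : B d d = B d x + B d y := by
        rw [← map_add, hxy']
      rw [this, hGal x hx, hB₀E y hy, hBd y (hSle hy)]; ring
    -- Cauchy-Schwarz: (B₀ E y)² ≤ ζ * B₀ y y
    have hcs2 : (B₀ E y) ^ 2 ≤ ζ * B₀ y y := by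
      have := bilin_cs_sq B₀ hB₀symm hB₀nn E y
      rwa [hζE] at this
    -- strengthened CS: (1-γ²) * B₀ y y ≤ B₀ d d
    have hyd : (1 - γ ^ 2) * B₀ y y ≤ B₀ d d := by
      have hscs := hSCS x hx y hy
      have hxx := Real.sq_sqrt (hB₀nn x)
      have hyy := Real.sq_sqrt (hB₀nn y)
      have hxnn := Real.sqrt_nonneg (B₀ x x)
      have hynn := Real.sqrt_nonneg (B₀ y y)
      have hdd : B₀ d d = B₀ x x + 2 * B₀ x y + B₀ y y := by
        conv_lhs => rw [← hxy']
        simp only [map_add, LinearMap.add_apply]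
        rw [hB₀symm y x]; ring
      have habs := abs_le.mp hscs
      nlinarith [sq_nonneg (Real.sqrt (B₀ x x) - γ * Real.sqrt (B₀ y y))]
    have hdd2 : B₀ d d ≤ Lam * B d d := (hequiv' d).2
    -- combine
    have hBdd := hBnn d
    have hkey : (B d d) ^ 2 * (1 - γ ^ 2) ≤ ζ * Lam * B d d := by
      rw [hBdy]
      have t1 := mul_le_mul_of_nonneg_right hcs2 hγ2.le
      have t2 := mul_le_mul_of_nonneg_left hyd hζnn
      have t3 := mul_le_mul_of_nonneg_left hdd2 hζnn
      rw [hBdy] at t3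
      nlinarith [hB₀nn y]
    rcases eq_or_lt_of_le hBdd with h0 | h0
    · rw [← h0]; positivity
    · rw [div_mul_eq_mul_div, le_div_iff₀ hγ2]
      nlinarith
end

section
/- Let u_X be the Galerkin solution in X and let u_{W₂} be the Galerkin solution in W₂ := X + Σ_{ν∈J̄} Y^ν. For each ν ∈ J̄ let e^ν ∈ Y^ν satisfy B₀(e^ν, v) = F(v) − B(u_X, v) for all v ∈ Y^ν, and set ζ := Σ_{ν∈J̄} ‖e^ν‖²_{B₀}. Then λ·ζ ≤ ‖u_{W₂} − u_X‖²_B ≤ Λ·ζ. -/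
private lemma cs_aux {V : Type*} [AddCommGroup V] [Module ℝ V]
    (B : V →ₗ[ℝ] V →ₗ[ℝ] ℝ) (hs : ∀ u v : V, B u v = B v u)
    (hpos : ∀ v : V, 0 ≤ B v v) (u v : V) :
    (B u v) ^ 2 ≤ B u u * B v v := by
  have h : ∀ t : ℝ, 0 ≤ B v v * (t * t) + (2 * B u v) * t + B u u := by
    intro t
    have h0 := hpos (u + t • v)
    simp only [map_add, map_smul, LinearMap.add_apply, LinearMap.smul_apply,
      smul_eq_mul] at h0
    rw [hs v u] at h0
    nlinarith [h0]
  have hd := discrim_le_zero h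
  unfold discrim at hd
  nlinarith [hd]



/-- Theorem 5.1, second estimate (parametric enrichment).
`uX` is the Galerkin solution in `X`, `uW₂` is the Galerkin solution in
`W₂ = X + Σ_{ν∈J̄} Y^ν` where the spaces `Y^ν`, `ν ∈ J̄`, are pairwise
`B₀`-orthogonal and each `Y^ν` is `B₀`-orthogonal to `X`.  For each `ν ∈ J̄`,
`e^ν ∈ Y^ν` solves `B₀(e^ν, v) = F(v) - B(uX, v)` for all `v ∈ Y^ν`, and
`ζ = Σ_{ν∈J̄} ‖e^ν‖²_{B₀}`.  With norm equivalence constants `λ, Λ > 0`,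
`λ·ζ ≤ ‖uW₂ - uX‖²_B ≤ Λ·ζ`. -/
theorem stmt2
    {V : Type*} [AddCommGroup V] [Module ℝ V]
    (B B₀ : V →ₗ[ℝ] V →ₗ[ℝ] ℝ)
    (hBsymm : ∀ u v : V, B u v = B v u)
    (hBpos : ∀ v : V, v ≠ 0 → 0 < B v v)
    (hB₀symm : ∀ u v : V, B₀ u v = B₀ v u)
    (hB₀pos : ∀ v : V, v ≠ 0 → 0 < B₀ v v)
    (F : V →ₗ[ℝ] ℝ)
    (X : Submodule ℝ V)
    {ι : Type*} (Jbar : Finset ι) (Y : ι → Submodule ℝ V)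
    (hYorth : ∀ μ ∈ Jbar, ∀ ν ∈ Jbar, μ ≠ ν →
      ∀ y ∈ Y μ, ∀ y' ∈ Y ν, B₀ y y' = 0)
    (hXorth : ∀ ν ∈ Jbar, ∀ x ∈ X, ∀ y ∈ Y ν, B₀ x y = 0)
    (lam Lam : ℝ) (hlam : 0 < lam) (hLam : 0 < Lam)
    (hequiv : ∀ v : V,
      lam * Real.sqrt (B v v) ^ 2 ≤ Real.sqrt (B₀ v v) ^ 2 ∧
      Real.sqrt (B₀ v v) ^ 2 ≤ Lam * Real.sqrt (B v v) ^ 2)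
    (uX uW₂ : V)
    (huXmem : uX ∈ X) (huX : ∀ v ∈ X, B uX v = F v)
    (huW₂mem : uW₂ ∈ X ⊔ ⨆ ν ∈ Jbar, Y ν)
    (huW₂ : ∀ v ∈ X ⊔ ⨆ ν ∈ Jbar, Y ν, B uW₂ v = F v)
    (e : ι → V)
    (hemem : ∀ ν ∈ Jbar, e ν ∈ Y ν)
    (he : ∀ ν ∈ Jbar, ∀ v ∈ Y ν, B₀ (e ν) v = F v - B uX v) :
    lam * (∑ ν ∈ Jbar, Real.sqrt (B₀ (e ν) (e ν)) ^ 2) ≤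
        Real.sqrt (B (uW₂ - uX) (uW₂ - uX)) ^ 2 ∧
    Real.sqrt (B (uW₂ - uX) (uW₂ - uX)) ^ 2 ≤
      Lam * (∑ ν ∈ Jbar, Real.sqrt (B₀ (e ν) (e ν)) ^ 2) := by
  -- nonnegativity
  have hBnn : ∀ v : V, 0 ≤ B v v := by
    intro v
    by_cases hv : v = 0
    · simp [hv]
    · exact (hBpos v hv).le
  have hB₀nn : ∀ v : V, 0 ≤ B₀ v v := by
    intro v
    by_cases hv : v = 0
    · simp [hv]
    · exact (hB₀pos v hv).le
  -- remove sqrt^2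
  have hsq : ∀ v : V, Real.sqrt (B v v) ^ 2 = B v v := fun v => Real.sq_sqrt (hBnn v)
  have hsq₀ : ∀ v : V, Real.sqrt (B₀ v v) ^ 2 = B₀ v v := fun v => Real.sq_sqrt (hB₀nn v)
  simp only [hsq, hsq₀]
  have hequiv' : ∀ v : V, lam * B v v ≤ B₀ v v ∧ B₀ v v ≤ Lam * B v v := by
    intro v
    have := hequiv v
    rw [hsq, hsq₀] at this
    exact this
  set W₂ : Submodule ℝ V := X ⊔ ⨆ ν ∈ Jbar, Y ν with hW₂
  have hYle : ∀ ν ∈ Jbar, Y ν ≤ W₂ := by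
    intro ν hν
    exact le_trans (le_biSup Y hν) le_sup_right
  set E : V := ∑ ν ∈ Jbar, e ν with hE
  set d : V := uW₂ - uX with hd
  have hEmem : E ∈ W₂ := Submodule.sum_mem _ fun ν hν => hYle ν hν (hemem ν hν)
  have hdmem : d ∈ W₂ := Submodule.sub_mem _ huW₂mem (le_sup_left (b := ⨆ ν ∈ Jbar, Y ν) huXmem)
  -- B₀ E applied: sum
  have hB₀E : ∀ v : V, B₀ E v = ∑ ν ∈ Jbar, B₀ (e ν) v := by
    intro v
    rw [hE, map_sum, LinearMap.sum_apply]
  -- key: B d v = B₀ E v on W₂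
  have key : ∀ v ∈ W₂, B d v = B₀ E v := by
    have hsub : W₂ ≤ LinearMap.ker (B d - B₀ E) := by
      rw [hW₂]
      apply sup_le
      · intro x hx
        rw [LinearMap.mem_ker, LinearMap.sub_apply]
        have h1 : B d x = 0 := by
          rw [hd, map_sub, LinearMap.sub_apply,
            huW₂ x (le_sup_left (b := ⨆ ν ∈ Jbar, Y ν) hx), huX x hx, sub_self]
        have h2 : B₀ E x = 0 := by
          rw [hB₀E]
          apply Finset.sum_eq_zero
          intro ν hν
          rw [hB₀symm]
          exact hXorth ν hν x hx (e ν) (hemem ν hν)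
        rw [h1, h2, sub_self]
      · apply iSup₂_le
        intro ν hν y hy
        rw [LinearMap.mem_ker, LinearMap.sub_apply]
        have h1 : B d y = F y - B uX y := by
          rw [hd, map_sub, LinearMap.sub_apply, huW₂ y (hYle ν hν hy)]
        have h2 : B₀ E y = F y - B uX y := by
          rw [hB₀E]
          rw [Finset.sum_eq_single ν]
          · exact he ν hν y hy
          · intro μ hμ hμν
            exact hYorth μ hμ ν hν hμν (e μ) (hemem μ hμ) y hy
          · intro h; exact absurd hν h
        rw [h1, h2, sub_self]
    intro v hv
    have := hsub hv
    rw [LinearMap.mem_ker, LinearMap.sub_apply, sub_eq_zero] at this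
    exact this
  -- ζ = B₀ E E
  have hdiag : ∀ ν ∈ Jbar, B₀ (e ν) E = B₀ (e ν) (e ν) := by
    intro ν hν
    rw [hB₀symm, hB₀E, Finset.sum_eq_single ν]
    · intro μ hμ hμν
      exact hYorth μ hμ ν hν hμν (e μ) (hemem μ hμ) (e ν) (hemem ν hν)
    · intro h; exact absurd hν h
  have hζ : ∑ ν ∈ Jbar, B₀ (e ν) (e ν) = B₀ E E := by
    rw [hB₀E E]
    exact Finset.sum_congr rfl fun ν hν => ((hdiag ν hν).trans (hB₀symm _ _)).symm
  rw [hζ]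
  have h1 : B d d = B₀ E d := key d hdmem
  have h2 : B₀ E E = B d E := (key E hEmem).symm
  have csB := cs_aux B hBsymm hBnn d E
  have csB₀ := cs_aux B₀ hB₀symm hB₀nn E d
  have heE := hequiv' E
  have heD := hequiv' d
  constructor
  · -- lam * B₀ E E ≤ B d d
    by_cases hz : B₀ E E = 0
    · rw [hz]; simpa using hBnn d
    · have hzpos : 0 < B₀ E E := lt_of_le_of_ne (hB₀nn E) (Ne.symm hz)
      -- (B₀ E E)^2 = (B d E)^2 ≤ B d d * B E E ≤ B d d * B₀ E E / lam
      have hBE : lam * B E E ≤ B₀ E E := heE.1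
      rw [← h2] at csB
      nlinarith [mul_le_mul_of_nonneg_left hBE (hBnn d),
        mul_le_mul_of_nonneg_left csB hlam.le, hzpos]
  · by_cases hz : B d d = 0
    · rw [hz]
      have := hB₀nn E
      positivity
    · have hzpos : 0 < B d d := lt_of_le_of_ne (hBnn d) (Ne.symm hz)
      rw [← h1] at csB₀
      nlinarith [csB₀, mul_le_mul_of_nonneg_left heD.2 (hB₀nn E), hzpos]
end

section
/- Let X ⊆ W be subspaces of V, let u ∈ V satisfy B(u,v) = F(v) for all v ∈ V, let u_X and u_W be the Galerkin solutions in X and in W respectively, and assume the saturation property ‖u − u_W‖_B ≤ β·‖u − u_X‖_B for a constant β ∈ [0,1). Then ‖u_W − u_X‖_B ≤ ‖u − u_X‖_B ≤ (1 − β²)^{−1/2}·‖u_W − u_X‖_B. -/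
/-- two-sided bound from the saturation assumption.
For subspaces `X ⊆ W` of `V`, with `u` the weak solution, `uX` and `uW` the
Galerkin solutions in `X` and `W` respectively (w.r.t. a symmetric positive
definite bilinear form `B` and linear functional `F`), if the saturation
property `‖u - uW‖_B ≤ β·‖u - uX‖_B` holds with `β ∈ [0,1)`, then
`‖uW - uX‖_B ≤ ‖u - uX‖_B ≤ (1-β²)^{-1/2}·‖uW - uX‖_B`. -/
theorem stmt5
    {V : Type*} [AddCommGroup V] [Module ℝ V]
    (B : V →ₗ[ℝ] V →ₗ[ℝ] ℝ)
    (hBsymm : ∀ u v : V, B u v = B v u)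
    (hBpos : ∀ v : V, v ≠ 0 → 0 < B v v)
    (F : V →ₗ[ℝ] ℝ)
    (X W : Submodule ℝ V) (hXW : X ≤ W)
    (u uX uW : V)
    (hu : ∀ v : V, B u v = F v)
    (huXmem : uX ∈ X) (huX : ∀ v ∈ X, B uX v = F v)
    (huWmem : uW ∈ W) (huW : ∀ v ∈ W, B uW v = F v)
    (β : ℝ) (hβ0 : 0 ≤ β) (hβ1 : β < 1)
    (hsat : Real.sqrt (B (u - uW) (u - uW)) ≤ β * Real.sqrt (B (u - uX) (u - uX))) :
    Real.sqrt (B (uW - uX) (uW - uX)) ≤ Real.sqrt (B (u - uX) (u - uX)) ∧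
    Real.sqrt (B (u - uX) (u - uX)) ≤
      (1 - β ^ 2) ^ (-(1 : ℝ) / 2) * Real.sqrt (B (uW - uX) (uW - uX)) := by
  have hnn : ∀ v : V, 0 ≤ B v v := by
    intro v
    rcases eq_or_ne v 0 with rfl | hv
    · simp
    · exact (hBpos v hv).le
  have horth : B (u - uW) (uW - uX) = 0 := by
    have hmem : uW - uX ∈ W := sub_mem huWmem (hXW huXmem)
    have h1 := hu (uW - uX)
    have h2 := huW (uW - uX) hmem
    simp only [map_sub, LinearMap.sub_apply] at h1 h2 ⊢
    linarith
  set A := B (u - uX) (u - uX) with hA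
  set C := B (uW - uX) (uW - uX) with hC
  set D := B (u - uW) (u - uW) with hD
  have hpyth : A = D + C := by
    have hdecomp : u - uX = (u - uW) + (uW - uX) := by abel
    have hsy := hBsymm (u - uW) (uW - uX)
    rw [hA, hdecomp]
    simp only [map_add, LinearMap.add_apply, hD, hC]
    rw [horth] at *
    linarith [horth, hsy]
  have hAnn : 0 ≤ A := hnn _
  have hCnn : 0 ≤ C := hnn _
  have hDnn : 0 ≤ D := hnn _
  -- squaring hsat : D ≤ β² A
  have hsq : D ≤ β ^ 2 * A := by
    have h1 : Real.sqrt D ^ 2 ≤ (β * Real.sqrt A) ^ 2 := by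
      apply pow_le_pow_left₀ (Real.sqrt_nonneg _) hsat
    rwa [Real.sq_sqrt hDnn, mul_pow, Real.sq_sqrt hAnn] at h1
  have hkey : (1 - β ^ 2) * A ≤ C := by nlinarith
  constructor
  · exact Real.sqrt_le_sqrt (by nlinarith)
  · have hb : (0:ℝ) < 1 - β ^ 2 := by nlinarith
    have hrw : (1 - β ^ 2) ^ (-(1 : ℝ) / 2) = (Real.sqrt (1 - β ^ 2))⁻¹ := by
      rw [show (-(1:ℝ)/2) = -(1/2) by ring, Real.rpow_neg hb.le,
        ← Real.sqrt_eq_rpow]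
    rw [hrw, ← Real.sqrt_inv, ← Real.sqrt_mul (by positivity)]
    apply Real.sqrt_le_sqrt
    rw [inv_mul_eq_div, le_div_iff₀ hb]
    linarith [hkey]
end

section
/- Let u_X be the Galerkin solution in X, let e_W ∈ W := X + Y satisfy B(e_W, v) = F(v) − B(u_X, v) for all v ∈ W, and let e_Y ∈ Y satisfy B₀(e_Y, v) = F(v) − B(u_X, v) for all v ∈ Y. Then √λ·‖e_Y‖_{B₀} ≤ ‖e_W‖_B ≤ √(Λ/(1−γ²))·‖e_Y‖_{B₀}. -/
private lemma csB {V : Type*} [AddCommGroup V] [Module ℝ V]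
    (B : V →ₗ[ℝ] V →ₗ[ℝ] ℝ)
    (hs : ∀ u v : V, B u v = B v u)
    (hp : ∀ v : V, v ≠ 0 → 0 < B v v) (u v : V) :
    (B u v) ^ 2 ≤ B u u * B v v := by
  by_cases hv : v = 0
  · simp [hv]
  · have hvv : 0 < B v v := hp v hv
    have hnn : ∀ w : V, 0 ≤ B w w := by
      intro w
      by_cases hw : w = 0
      · simp [hw]
      · exact (hp w hw).le
    have key : 0 ≤ B (B v v • u - B u v • v) (B v v • u - B u v • v) := hnn _
    simp only [map_sub, map_smul, LinearMap.sub_apply, LinearMap.smul_apply,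
      smul_eq_mul] at key
    rw [← hs u v] at key
    nlinarith [key, hvv]

/-- equivalence of the full error estimate `e_W` and the cheap
estimate `e_Y`.  `uX` is the Galerkin solution in `X`, `e_W ∈ W = X + Y`
solves `B(e_W, v) = F(v) - B(uX, v)` for all `v ∈ W`, and `e_Y ∈ Y` solves
`B₀(e_Y, v) = F(v) - B(uX, v)` for all `v ∈ Y`.  With norm equivalence
constants `λ, Λ > 0` and strengthened Cauchy-Schwarz constant `γ ∈ [0,1)`
between `X` and `Y` w.r.t. `B₀`,
`√λ·‖e_Y‖_{B₀} ≤ ‖e_W‖_B ≤ √(Λ/(1-γ²))·‖e_Y‖_{B₀}`. -/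
theorem stmt6
    {V : Type*} [AddCommGroup V] [Module ℝ V]
    (B B₀ : V →ₗ[ℝ] V →ₗ[ℝ] ℝ)
    (hBsymm : ∀ u v : V, B u v = B v u)
    (hBpos : ∀ v : V, v ≠ 0 → 0 < B v v)
    (hB₀symm : ∀ u v : V, B₀ u v = B₀ v u)
    (hB₀pos : ∀ v : V, v ≠ 0 → 0 < B₀ v v)
    (F : V →ₗ[ℝ] ℝ)
    (X Y : Submodule ℝ V)
    (lam Lam : ℝ) (hlam : 0 < lam) (hLam : 0 < Lam)
    (hequiv : ∀ v : V,
      lam * Real.sqrt (B v v) ^ 2 ≤ Real.sqrt (B₀ v v) ^ 2 ∧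
      Real.sqrt (B₀ v v) ^ 2 ≤ Lam * Real.sqrt (B v v) ^ 2)
    (γ : ℝ) (hγ0 : 0 ≤ γ) (hγ1 : γ < 1)
    (hSCS : ∀ x ∈ X, ∀ y ∈ Y,
      |B₀ x y| ≤ γ * Real.sqrt (B₀ x x) * Real.sqrt (B₀ y y))
    (uX eW eY : V)
    (huXmem : uX ∈ X) (huX : ∀ v ∈ X, B uX v = F v)
    (heWmem : eW ∈ X ⊔ Y) (heW : ∀ v ∈ X ⊔ Y, B eW v = F v - B uX v)
    (heYmem : eY ∈ Y) (heY : ∀ v ∈ Y, B₀ eY v = F v - B uX v) :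
    Real.sqrt lam * Real.sqrt (B₀ eY eY) ≤ Real.sqrt (B eW eW) ∧
    Real.sqrt (B eW eW) ≤
      Real.sqrt (Lam / (1 - γ ^ 2)) * Real.sqrt (B₀ eY eY) := by
  have nnB : ∀ v : V, 0 ≤ B v v := by
    intro v; by_cases hv : v = 0
    · simp [hv]
    · exact (hBpos v hv).le
  have nnB₀ : ∀ v : V, 0 ≤ B₀ v v := by
    intro v; by_cases hv : v = 0
    · simp [hv]
    · exact (hB₀pos v hv).le
  have heq : ∀ v : V, lam * B v v ≤ B₀ v v ∧ B₀ v v ≤ Lam * B v v := by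
    intro v
    have h := hequiv v
    rwa [Real.sq_sqrt (nnB v), Real.sq_sqrt (nnB₀ v)] at h
  have hγ2 : 0 < 1 - γ ^ 2 := by nlinarith
  -- decomposition of eW
  obtain ⟨x, hx, y, hy, hxy⟩ := Submodule.mem_sup.mp heWmem
  have hYW : eY ∈ X ⊔ Y := Submodule.mem_sup_right heYmem
  have key1 : B₀ eY eY = B eW eY := (heY eY heYmem).trans (heW eY hYW).symm
  -- lower bound squared
  have h1 : lam * B₀ eY eY ≤ B eW eW := by
    rcases eq_or_lt_of_le (nnB₀ eY) with h0 | h0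
    · rw [← h0, mul_zero]; exact nnB eW
    · have hcs := csB B hBsymm hBpos eW eY
      rw [← key1] at hcs
      nlinarith [mul_le_mul_of_nonneg_left hcs hlam.le,
        mul_le_mul_of_nonneg_left (heq eY).1 (nnB eW), h0]
  -- key identity for upper bound
  have key2 : B eW eW = B₀ eY y := by
    have h : B eW eW = B eW x + B eW y := by rw [← hxy, map_add]
    rw [h, heW x (Submodule.mem_sup_left hx), heW y (Submodule.mem_sup_right hy),
      heY y hy, huX x hx]
    ring
  -- strengthened CS estimate: (1-γ²)‖y‖² ≤ ‖eW‖²_{B₀}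
  have hb : (1 - γ ^ 2) * B₀ y y ≤ B₀ eW eW := by
    have hexp : B₀ eW eW = B₀ x x + 2 * B₀ x y + B₀ y y := by
      rw [← hxy]
      simp only [map_add, LinearMap.add_apply]
      rw [hB₀symm y x]; ring
    have habs := hSCS x hx y hy
    have hs2 : Real.sqrt (B₀ x x) ^ 2 = B₀ x x := Real.sq_sqrt (nnB₀ x)
    have ht2 : Real.sqrt (B₀ y y) ^ 2 = B₀ y y := Real.sq_sqrt (nnB₀ y)
    nlinarith [neg_abs_le (B₀ x y), Real.sqrt_nonneg (B₀ x x),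
      Real.sqrt_nonneg (B₀ y y),
      sq_nonneg (Real.sqrt (B₀ x x) - γ * Real.sqrt (B₀ y y))]
  have hyy : B₀ y y ≤ (Lam / (1 - γ ^ 2)) * B eW eW := by
    have h := (heq eW).2
    rw [div_mul_eq_mul_div, le_div_iff₀ hγ2]
    nlinarith [hb]
  have h2 : B eW eW ≤ (Lam / (1 - γ ^ 2)) * B₀ eY eY := by
    have hcs := csB B₀ hB₀symm hB₀pos eY y
    rcases eq_or_lt_of_le (nnB eW) with h0 | h0
    · rw [← h0]
      exact mul_nonneg (le_of_lt (div_pos hLam hγ2)) (nnB₀ eY)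
    · nlinarith [key2, hcs, nnB₀ eY, hyy, h0]
  constructor
  · rw [← Real.sqrt_mul hlam.le]
    exact Real.sqrt_le_sqrt h1
  · rw [← Real.sqrt_mul (le_of_lt (div_pos hLam hγ2))]
    exact Real.sqrt_le_sqrt h2
end

section
/- Let X and Y be subspaces of a real inner product space H, and let γ ∈ [0,1) satisfy |⟨x,y⟩| ≤ γ‖x‖‖y‖ for all x ∈ X and y ∈ Y (strengthened Cauchy–Schwarz inequality). Then for every x ∈ X and y ∈ Y, (1 − γ²)‖y‖² ≤ ‖x + y‖² and (1 − γ²)‖x‖² ≤ ‖x + y‖². -/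
open scoped RealInnerProductSpace

/-- consequence of the strengthened Cauchy-Schwarz inequality.
If `X` and `Y` are subspaces of a real inner product space `H` and `γ ∈ [0,1)`
satisfies `|⟨x,y⟩| ≤ γ‖x‖‖y‖` for all `x ∈ X`, `y ∈ Y`, then for every `x ∈ X`
and `y ∈ Y`, `(1-γ²)‖y‖² ≤ ‖x+y‖²` and `(1-γ²)‖x‖² ≤ ‖x+y‖²`. -/
theorem stmt7
    {H : Type*} [NormedAddCommGroup H] [InnerProductSpace ℝ H]
    (X Y : Submodule ℝ H)
    (γ : ℝ) (hγ0 : 0 ≤ γ) (hγ1 : γ < 1)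
    (hSCS : ∀ x ∈ X, ∀ y ∈ Y, |⟪x, y⟫| ≤ γ * ‖x‖ * ‖y‖) :
    ∀ x ∈ X, ∀ y ∈ Y,
      (1 - γ ^ 2) * ‖y‖ ^ 2 ≤ ‖x + y‖ ^ 2 ∧
      (1 - γ ^ 2) * ‖x‖ ^ 2 ≤ ‖x + y‖ ^ 2 := by
  intro x hx y hy
  have h := hSCS x hx y hy
  have habs := abs_le.mp h
  have hexp : ‖x + y‖ ^ 2 = ‖x‖ ^ 2 + 2 * ⟪x, y⟫ + ‖y‖ ^ 2 := by
    rw [@norm_add_sq_real]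
  constructor <;>
    nlinarith [sq_nonneg (‖x‖ - γ * ‖y‖), sq_nonneg (‖y‖ - γ * ‖x‖),
      norm_nonneg x, norm_nonneg y]
end

section
/- Let H be a real Hilbert space, let X be a finite-dimensional subspace of H, and let Y be a closed subspace of H with X ∩ Y = {0}. Then there exists a constant γ ∈ [0,1) such that |⟨x,y⟩| ≤ γ‖x‖‖y‖ for all x ∈ X and y ∈ Y. -/
/-!
Let `P` be the orthogonal projection onto `Y`. For `y ∈ Y` we have `⟪x, y⟫ = ⟪P x, y⟫`, so
`γ = ‖P|_X‖` works. Since `X ∩ Y = {0}`, `P` strictly shortens every nonzero `x ∈ X`, and on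
the compact unit sphere of the finite-dimensional `X` this strict inequality becomes `‖P|_X‖ < 1`.
-/

open scoped RealInnerProductSpace

theorem ContinuousLinearMap.opNorm_lt_one_of_norm_apply_lt {E F : Type*}
    [NormedAddCommGroup E] [NormedSpace ℝ E] [FiniteDimensional ℝ E]
    [SeminormedAddCommGroup F] [NormedSpace ℝ F]
    (T : E →L[ℝ] F) (hT : ∀ x ≠ 0, ‖T x‖ < ‖x‖) : ‖T‖ < 1 := by
  rcases subsingleton_or_nontrivial E with _ | _
  · simp [opNorm_subsingleton]
  obtain ⟨x₀, hx₀, hmax⟩ := (isCompact_sphere (0 : E) 1).exists_isMaxOn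
    (NormedSpace.sphere_nonempty.2 zero_le_one) (continuous_norm.comp T.continuous).continuousOn
  rw [mem_sphere_zero_iff_norm] at hx₀
  calc ‖T‖ ≤ ‖T x₀‖ :=
        T.opNorm_le_of_unit_norm (norm_nonneg _) fun x hx => hmax (mem_sphere_zero_iff_norm.2 hx)
    _ < 1 := hx₀ ▸ hT x₀ (ne_zero_of_norm_ne_zero (by simp [hx₀]))

namespace Submodule

variable {E : Type*} [NormedAddCommGroup E] [InnerProductSpace ℝ E]
  (K : Submodule ℝ E) [K.HasOrthogonalProjection]

theorem norm_starProjection_lt_of_notMem {x : E} (hx : x ∉ K) :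
    ‖K.starProjection x‖ < ‖x‖ :=
  (K.norm_starProjection_apply_le x).lt_of_ne (mt (K.mem_iff_norm_starProjection x).2 hx)

theorem abs_inner_le_norm_starProjection_mul_norm (x : E) {y : E} (hy : y ∈ K) :
    |⟪x, y⟫| ≤ ‖K.starProjection x‖ * ‖y‖ := by
  rw [← K.starProjection_eq_self_iff.2 hy, ← inner_starProjection_left_eq_right,
    K.starProjection_eq_self_iff.2 hy]
  exact abs_real_inner_le_norm _ _

end Submodule

/-- existence of a strengthened Cauchy-Schwarz (CBS) constant.
If `H` is a real Hilbert space, `X` a finite-dimensional subspace and `Y` a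
closed subspace with `X ∩ Y = {0}`, then there exists `γ ∈ [0,1)` with
`|⟨x,y⟩| ≤ γ‖x‖‖y‖` for all `x ∈ X`, `y ∈ Y`. -/
theorem stmt8
    {H : Type*} [NormedAddCommGroup H] [InnerProductSpace ℝ H] [CompleteSpace H]
    (X Y : Submodule ℝ H) [FiniteDimensional ℝ X]
    (hYclosed : IsClosed (Y : Set H))
    (hXY : X ⊓ Y = ⊥) :
    ∃ γ : ℝ, 0 ≤ γ ∧ γ < 1 ∧ ∀ x ∈ X, ∀ y ∈ Y, |⟪x, y⟫| ≤ γ * ‖x‖ * ‖y‖ := by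
  have : CompleteSpace Y := hYclosed.completeSpace_coe
  set T := Y.starProjection ∘L X.subtypeL
  have hT : ‖T‖ < 1 := T.opNorm_lt_one_of_norm_apply_lt fun x hx0 =>
    Y.norm_starProjection_lt_of_notMem fun hxY =>
      hx0 (by simpa [hXY] using Submodule.mem_inf.2 ⟨x.2, hxY⟩)
  refine ⟨‖T‖, T.opNorm_nonneg, hT, fun x hx y hy => ?_⟩
  calc |⟪x, y⟫| ≤ ‖Y.starProjection x‖ * ‖y‖ :=
        Y.abs_inner_le_norm_starProjection_mul_norm x hy
    _ ≤ ‖T‖ * ‖x‖ * ‖y‖ := by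
      gcongr
      exact T.le_opNorm ⟨x, hx⟩
end

section
/- Let I be a finite index set and let {V_i}_{i∈I} be pairwise orthogonal subspaces of H, i.e. ⟨v,w⟩ = 0 whenever v ∈ V_i, w ∈ V_j and i ≠ j. For each i ∈ I let X_i ⊆ V_i and Y_i ⊆ V_i be subspaces and let γ_i ∈ [0,1) satisfy |⟨x,y⟩| ≤ γ_i‖x‖‖y‖ for all x ∈ X_i and y ∈ Y_i. Let Z be a subspace of H orthogonal to every V_i, and let γ ∈ [0,1) satisfy γ_i ≤ γ for all i ∈ I. Then for every choice of x_i ∈ X_i, y_i ∈ Y_i (i ∈ I) and z ∈ Z, |⟨Σ_{i∈I} x_i, z + Σ_{i∈I} y_i⟩| ≤ γ·‖Σ_{i∈I} x_i‖·‖z + Σ_{i∈I} y_i‖. -/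
open scoped RealInnerProductSpace

/-- a global CBS constant from componentwise CBS constants
(cf. (4.14) and Remark 4.3).  `{V_i}_{i∈I}` are pairwise orthogonal subspaces
of a real inner product space `H`, with subspaces `X_i, Y_i ⊆ V_i` satisfying
componentwise strengthened Cauchy-Schwarz inequalities with constants
`γ_i ∈ [0,1)`, `Z` is a subspace orthogonal to every `V_i`, and `γ ∈ [0,1)`
dominates all `γ_i`.  Then for all `x_i ∈ X_i`, `y_i ∈ Y_i`, `z ∈ Z`,
`|⟨Σ x_i, z + Σ y_i⟩| ≤ γ·‖Σ x_i‖·‖z + Σ y_i‖`. -/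
theorem stmt9
    {H : Type*} [NormedAddCommGroup H] [InnerProductSpace ℝ H]
    {ι : Type*} (I : Finset ι)
    (V : ι → Submodule ℝ H)
    (hVorth : ∀ i ∈ I, ∀ j ∈ I, i ≠ j → ∀ v ∈ V i, ∀ w ∈ V j, ⟪v, w⟫ = 0)
    (X Y : ι → Submodule ℝ H)
    (hXV : ∀ i ∈ I, X i ≤ V i) (hYV : ∀ i ∈ I, Y i ≤ V i)
    (γi : ι → ℝ) (hγi : ∀ i ∈ I, 0 ≤ γi i ∧ γi i < 1)
    (hSCSi : ∀ i ∈ I, ∀ x ∈ X i, ∀ y ∈ Y i, |⟪x, y⟫| ≤ γi i * ‖x‖ * ‖y‖)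
    (Z : Submodule ℝ H)
    (hZorth : ∀ i ∈ I, ∀ z ∈ Z, ∀ v ∈ V i, ⟪z, v⟫ = 0)
    (γ : ℝ) (hγ0 : 0 ≤ γ) (hγ1 : γ < 1) (hγdom : ∀ i ∈ I, γi i ≤ γ)
    (x y : ι → H) (hx : ∀ i ∈ I, x i ∈ X i) (hy : ∀ i ∈ I, y i ∈ Y i)
    (z : H) (hz : z ∈ Z) :
    |⟪∑ i ∈ I, x i, z + ∑ i ∈ I, y i⟫| ≤
      γ * ‖∑ i ∈ I, x i‖ * ‖z + ∑ i ∈ I, y i‖ := by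
  have hxV : ∀ i ∈ I, x i ∈ V i := fun i hi => hXV i hi (hx i hi)
  have hyV : ∀ i ∈ I, y i ∈ V i := fun i hi => hYV i hi (hy i hi)
  -- cross terms vanish
  have hxy : ⟪∑ i ∈ I, x i, ∑ i ∈ I, y i⟫ = ∑ i ∈ I, ⟪x i, y i⟫ := by
    rw [sum_inner]
    refine Finset.sum_congr rfl fun i hi => ?_
    rw [inner_sum]
    refine Finset.sum_eq_single_of_mem i hi fun j hj hji => ?_
    exact hVorth i hi j hj (Ne.symm hji) _ (hxV i hi) _ (hyV j hj)
  have hxz : ⟪∑ i ∈ I, x i, z⟫ = 0 := by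
    rw [sum_inner]
    refine Finset.sum_eq_zero fun i hi => ?_
    rw [real_inner_comm]
    exact hZorth i hi z hz _ (hxV i hi)
  have hyz : ⟪z, ∑ i ∈ I, y i⟫ = 0 := by
    rw [inner_sum]
    exact Finset.sum_eq_zero fun i hi => hZorth i hi z hz _ (hyV i hi)
  have hmain : ⟪∑ i ∈ I, x i, z + ∑ i ∈ I, y i⟫ = ∑ i ∈ I, ⟪x i, y i⟫ := by
    rw [inner_add_right, hxz, hxy, zero_add]
  -- norms of sums
  have hnx : ‖∑ i ∈ I, x i‖ ^ 2 = ∑ i ∈ I, ‖x i‖ ^ 2 := by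
    rw [← real_inner_self_eq_norm_sq, sum_inner]
    refine Finset.sum_congr rfl fun i hi => ?_
    rw [inner_sum, ← real_inner_self_eq_norm_sq]
    refine Finset.sum_eq_single_of_mem i hi fun j hj hji => ?_
    exact hVorth i hi j hj (Ne.symm hji) _ (hxV i hi) _ (hxV j hj)
  have hny : ‖∑ i ∈ I, y i‖ ^ 2 = ∑ i ∈ I, ‖y i‖ ^ 2 := by
    rw [← real_inner_self_eq_norm_sq, sum_inner]
    refine Finset.sum_congr rfl fun i hi => ?_
    rw [inner_sum, ← real_inner_self_eq_norm_sq]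
    refine Finset.sum_eq_single_of_mem i hi fun j hj hji => ?_
    exact hVorth i hi j hj (Ne.symm hji) _ (hyV i hi) _ (hyV j hj)
  have hyz' : ⟪∑ i ∈ I, y i, z⟫ = 0 := by rw [real_inner_comm]; exact hyz
  have hnzy : ∑ i ∈ I, ‖y i‖ ^ 2 ≤ ‖z + ∑ i ∈ I, y i‖ ^ 2 := by
    rw [← real_inner_self_eq_norm_sq, inner_add_add_self, hyz, hyz', real_inner_self_eq_norm_sq,
      real_inner_self_eq_norm_sq, ← hny]
    nlinarith [sq_nonneg ‖z‖]
  have key : |∑ i ∈ I, ⟪x i, y i⟫| ≤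
      γ * Real.sqrt (∑ i ∈ I, ‖x i‖ ^ 2) * Real.sqrt (∑ i ∈ I, ‖y i‖ ^ 2) := by
    calc |∑ i ∈ I, ⟪x i, y i⟫| ≤ ∑ i ∈ I, |⟪x i, y i⟫| := Finset.abs_sum_le_sum_abs _ _
      _ ≤ ∑ i ∈ I, γ * (‖x i‖ * ‖y i‖) := by
          refine Finset.sum_le_sum fun i hi => ?_
          calc |⟪x i, y i⟫| ≤ γi i * ‖x i‖ * ‖y i‖ :=
                hSCSi i hi _ (hx i hi) _ (hy i hi)
            _ ≤ γ * (‖x i‖ * ‖y i‖) := by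
                rw [mul_assoc]
                exact mul_le_mul_of_nonneg_right (hγdom i hi) (by positivity)
      _ = γ * ∑ i ∈ I, ‖x i‖ * ‖y i‖ := by rw [Finset.mul_sum]
      _ ≤ γ * (Real.sqrt (∑ i ∈ I, ‖x i‖ ^ 2) * Real.sqrt (∑ i ∈ I, ‖y i‖ ^ 2)) := by
          exact mul_le_mul_of_nonneg_left
            (Real.sum_mul_le_sqrt_mul_sqrt I (fun i => ‖x i‖) (fun i => ‖y i‖)) hγ0
      _ = _ := by ring
  rw [hmain]
  have h1 : Real.sqrt (∑ i ∈ I, ‖x i‖ ^ 2) = ‖∑ i ∈ I, x i‖ := by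
    rw [← hnx, Real.sqrt_sq (norm_nonneg _)]
  have h2 : Real.sqrt (∑ i ∈ I, ‖y i‖ ^ 2) ≤ ‖z + ∑ i ∈ I, y i‖ := by
    rw [show ‖z + ∑ i ∈ I, y i‖ = Real.sqrt (‖z + ∑ i ∈ I, y i‖ ^ 2) by
      rw [Real.sqrt_sq (norm_nonneg _)]]
    exact Real.sqrt_le_sqrt hnzy
  calc |∑ i ∈ I, ⟪x i, y i⟫| ≤ γ * Real.sqrt (∑ i ∈ I, ‖x i‖ ^ 2) *
        Real.sqrt (∑ i ∈ I, ‖y i‖ ^ 2) := key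
    _ ≤ γ * ‖∑ i ∈ I, x i‖ * ‖z + ∑ i ∈ I, y i‖ := by
        rw [h1]
        exact mul_le_mul_of_nonneg_left h2 (by positivity)
end
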